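/- A coalgebra endomorphism Φ of the reduced tensor coalgebra T(V) whose arity-1 term is an isomorphism (e.g. the identity of V) is itself an isomorphism of coalgebras. -/

import Mathlib

open scoped TensorProduct DirectSum
open PiTensorProduct

variable (R : Type) [CommRing R] (V : Type) [AddCommGroup V] [Module R V]

/-- The `n`-th tensor power of `V`. -/
abbrev TP (n : ℕ) : Type := ⨂[R] _ : Fin n, V

/-- The reduced tensor coalgebra `T(V) = ⊕_{n ≥ 1} V^{⊗ n}` (the summand indexed by
`m : ℕ` is `V^{⊗(m+1)}`). -/
abbrev TCoalg : Type := ⨁ m : ℕ, TP R V (m + 1)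

/-- Cast between tensor powers along an equality of exponents. -/
noncomputable def pcast {a b : ℕ} (h : a = b) : TP R V a ≃ₗ[R] TP R V b :=
  PiTensorProduct.reindex R (fun _ => V) (finCongr h)

/-- Splitting a tensor power into a tensor product of two tensor powers. -/
noncomputable def splitTP (a b : ℕ) : TP R V (a + b) ≃ₗ[R] TP R V a ⊗[R] TP R V b :=
  (PiTensorProduct.reindex R (fun _ => V) finSumFinEquiv.symm).trans
    (PiTensorProduct.tmulEquiv R V).symm

/-- The deconcatenation comultiplication on the reduced tensor coalgebra,
`Δ(v₁⋯vₙ) = Σ_{i=1}^{n-1} (v₁⋯vᵢ) ⊗ (v_{i+1}⋯vₙ)`. -/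
noncomputable def Delta : TCoalg R V →ₗ[R] TCoalg R V ⊗[R] TCoalg R V :=
  DirectSum.toModule R ℕ _ fun n =>
    ∑ i : Fin n,
      (TensorProduct.map
          (DirectSum.lof R ℕ (fun m => TP R V (m + 1)) i)
          ((DirectSum.lof R ℕ (fun m => TP R V (m + 1)) (n - 1 - ↑i)).comp
            (pcast R V (by have := i.isLt; omega)).toLinearMap)).comp
        ((splitTP R V (↑i + 1) (n - ↑i)).toLinearMap.comp
          (pcast R V (by have := i.isLt; omega)).toLinearMap)

/-- The projection of the reduced tensor coalgebra onto its cogenerators `V`. -/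
noncomputable def projV : TCoalg R V →ₗ[R] V :=
  (PiTensorProduct.subsingletonEquiv (0 : Fin 1)).toLinearMap.comp
    (DirectSum.component R ℕ (fun m => TP R V (m + 1)) 0)

/-- The inclusion of the cogenerators `V` into the reduced tensor coalgebra. -/
noncomputable def inclV : V →ₗ[R] TCoalg R V :=
  (DirectSum.lof R ℕ (fun m => TP R V (m + 1)) 0).comp
    (PiTensorProduct.subsingletonEquiv (s := fun _ : Fin 1 => V) (0 : Fin 1)).symm.toLinearMap

/-- A linear endomorphism of the reduced tensor coalgebra is a coalgebra morphism if it
commutes with the deconcatenation comultiplication. -/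
noncomputable def IsCoalgMor (F : TCoalg R V →ₗ[R] TCoalg R V) : Prop :=
  (Delta R V).comp F = (TensorProduct.map F F).comp (Delta R V)

/-!
A coalgebra endomorphism `Φ` of `T(V)` never raises tensor degree, and its diagonal blocks
`V^{⊗n} → V^{⊗n}` are bijective. Both follow by induction on the degree: projecting
`Δ ∘ Φ = (Φ ⊗ Φ) ∘ Δ` onto `V ⊗ V^{⊗m}` identifies the block `V^{⊗n} → V^{⊗(m+1)}` of `Φ`,
up to the isomorphism `V^{⊗(m+1)} ≅ V ⊗ V^{⊗m}`, with a sum of tensor products of blocks of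
lower source degree; for `n = m + 1` only `Φ₁ ⊗ Φ_{m,m}` survives. A degree-non-increasing map of
an `ℕ`-graded module with bijective diagonal blocks is bijective (invert it along the degree
filtration), and the linear inverse of a bijective coalgebra morphism is again a coalgebra
morphism.
-/

namespace DirectSum

variable {S : Type*} [Ring S] {M : ℕ → Type*} [∀ i, AddCommGroup (M i)] [∀ i, Module S (M i)]

variable (S M) in
def degreeLT (k : ℕ) : Submodule S (⨁ i, M i) where
  carrier := {z | ∀ m, k ≤ m → z m = 0}
  add_mem' hx hy m hm := by rw [add_apply, hx m hm, hy m hm, add_zero]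
  zero_mem' _ _ := rfl
  smul_mem' c z hz m hm := by rw [smul_apply, hz m hm, smul_zero]

theorem exists_mem_degreeLT (z : ⨁ i, M i) : ∃ k, z ∈ degreeLT S M k := by
  classical
  refine ⟨z.support.sup id + 1, fun m hm => ?_⟩
  by_contra h
  have := Finset.le_sup (f := id) (DFinsupp.mem_support_iff.mpr h)
  simp only [id] at this
  omega

theorem eq_zero_of_mem_degreeLT_zero {z : ⨁ i, M i} (hz : z ∈ degreeLT S M 0) : z = 0 :=
  DFinsupp.ext fun m => hz m m.zero_le

theorem degreeLT_le_succ (k : ℕ) : degreeLT S M k ≤ degreeLT S M (k + 1) :=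
  fun _ hz m hm => hz m (by omega)

theorem mem_degreeLT_of_mem_succ {k : ℕ} {z : ⨁ i, M i} (hz : z ∈ degreeLT S M (k + 1))
    (hk : z k = 0) : z ∈ degreeLT S M k := fun m hm =>
  (eq_or_lt_of_le hm).elim (fun h => h ▸ hk) fun h => hz m h

theorem lof_mem_degreeLT_succ (k : ℕ) (x : M k) : lof S ℕ M k x ∈ degreeLT S M (k + 1) :=
  fun m hm => by rw [lof_eq_of, of_eq_of_ne _ _ _ (by omega)]

theorem sub_lof_mem_degreeLT {k : ℕ} {z : ⨁ i, M i} (hz : z ∈ degreeLT S M (k + 1)) :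
    z - lof S ℕ M k (z k) ∈ degreeLT S M k :=
  mem_degreeLT_of_mem_succ (sub_mem hz (lof_mem_degreeLT_succ k _)) (by simp)

def block (f : (⨁ i, M i) →ₗ[S] ⨁ i, M i) (m n : ℕ) : M n →ₗ[S] M m :=
  component S ℕ M m ∘ₗ f ∘ₗ lof S ℕ M n

theorem block_apply (f : (⨁ i, M i) →ₗ[S] ⨁ i, M i) (m n : ℕ) (x : M n) :
    block f m n x = f (lof S ℕ M n x) m :=
  rfl

section Triangular

variable {f : (⨁ i, M i) →ₗ[S] ⨁ i, M i}

theorem map_mem_degreeLT (hf : ∀ n m, n < m → block f m n = 0) {k : ℕ} {z : ⨁ i, M i}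
    (hz : z ∈ degreeLT S M k) : f z ∈ degreeLT S M k := by
  induction k generalizing z with
  | zero => rw [eq_zero_of_mem_degreeLT_zero hz, map_zero]; exact zero_mem _
  | succ k ih =>
    rw [← sub_add_cancel z (lof S ℕ M k (z k)), map_add]
    refine add_mem (degreeLT_le_succ k (ih (sub_lof_mem_degreeLT hz))) fun m hm => ?_
    rw [← block_apply, hf k m (by omega), LinearMap.zero_apply]

theorem map_apply_of_mem_degreeLT_succ (hf : ∀ n m, n < m → block f m n = 0)
    {k : ℕ} {z : ⨁ i, M i} (hz : z ∈ degreeLT S M (k + 1)) :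
    f z k = block f k k (z k) := by
  conv_lhs => rw [← sub_add_cancel z (lof S ℕ M k (z k)), map_add, add_apply]
  rw [map_mem_degreeLT hf (sub_lof_mem_degreeLT hz) k le_rfl, zero_add, block_apply]

theorem eq_zero_of_mem_degreeLT_of_map_eq_zero (hf : ∀ n m, n < m → block f m n = 0)
    (hdiag : ∀ n, Function.Injective (block f n n)) {k : ℕ} {z : ⨁ i, M i}
    (hz : z ∈ degreeLT S M k) (hfz : f z = 0) : z = 0 := by
  induction k with
  | zero => exact eq_zero_of_mem_degreeLT_zero hz
  | succ k ih =>
    have hk : block f k k (z k) = block f k k 0 := by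
      rw [← map_apply_of_mem_degreeLT_succ hf hz, hfz, zero_apply, map_zero]
    exact ih (mem_degreeLT_of_mem_succ hz (hdiag k hk))

theorem degreeLT_le_range (hf : ∀ n m, n < m → block f m n = 0)
    (hdiag : ∀ n, Function.Surjective (block f n n)) (k : ℕ) :
    degreeLT S M k ≤ LinearMap.range f := by
  induction k with
  | zero => exact fun z hz => (eq_zero_of_mem_degreeLT_zero hz) ▸ zero_mem _
  | succ k ih =>
    intro z hz
    obtain ⟨y, hy⟩ := hdiag k (z k)
    have hrest : z - f (lof S ℕ M k y) ∈ degreeLT S M k :=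
      mem_degreeLT_of_mem_succ (sub_mem hz (map_mem_degreeLT hf (lof_mem_degreeLT_succ k y)))
        (by rw [sub_apply, ← block_apply, hy, sub_self])
    simpa using add_mem (ih hrest) (LinearMap.mem_range_self f (lof S ℕ M k y))

theorem bijective_of_block_triangular (hf : ∀ n m, n < m → block f m n = 0)
    (hdiag : ∀ n, Function.Bijective (block f n n)) : Function.Bijective f := by
  refine ⟨(injective_iff_map_eq_zero f).mpr fun z hfz => ?_, fun z => ?_⟩
  · obtain ⟨k, hk⟩ := exists_mem_degreeLT (S := S) z
    exact eq_zero_of_mem_degreeLT_of_map_eq_zero hf (fun n => (hdiag n).injective) hk hfz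
  · obtain ⟨k, hk⟩ := exists_mem_degreeLT (S := S) z
    exact degreeLT_le_range hf (fun n => (hdiag n).surjective) k hk

end Triangular

end DirectSum

section TensorCoalgebra

open DirectSum TensorProduct LinearMap

variable {R V}

theorem map_comp_Delta_comp_lof {P Q : Type*} [AddCommGroup P] [Module R P] [AddCommGroup Q]
    [Module R Q] (f : TCoalg R V →ₗ[R] P) (g : TCoalg R V →ₗ[R] Q) (n : ℕ) :
    map f g ∘ₗ Delta R V ∘ₗ lof R ℕ (fun m => TP R V (m + 1)) n =
      ∑ i : Fin n, map (f ∘ₗ lof R ℕ _ i)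
          ((g ∘ₗ lof R ℕ _ (n - 1 - i)) ∘ₗ (pcast R V (by have := i.isLt; omega)).toLinearMap) ∘ₗ
        (splitTP R V (i + 1) (n - i)).toLinearMap ∘ₗ
          (pcast R V (by have := i.isLt; omega)).toLinearMap := by
  refine LinearMap.ext fun x => ?_
  simp only [Delta, comp_apply, toModule_lof, LinearMap.sum_apply, map_sum, map_map]
  rfl

theorem bijective_component_comp_lof {i j : ℕ} (h : i = j) :
    Function.Bijective (component R ℕ (fun m => TP R V (m + 1)) j ∘ₗ lof R ℕ _ i) := by
  subst h
  rw [component_comp_lof_same]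
  exact Function.bijective_id

theorem exists_map_component_comp_Delta {a b c : ℕ} (h : a + b + 1 = c) :
    ∃ E : TP R V (c + 1) ≃ₗ[R] TP R V (a + 1) ⊗[R] TP R V (b + 1),
      map (component R ℕ _ a) (component R ℕ _ b) ∘ₗ Delta R V =
        E.toLinearMap ∘ₗ component R ℕ (fun m => TP R V (m + 1)) c := by
  subst h
  -- only the summand `i = a` of `Δ` lands in `V^{⊗(a+1)} ⊗ V^{⊗(b+1)}`, and it is a reindexing
  obtain ⟨E, hE⟩ : ∃ E : TP R V (a + b + 1 + 1) ≃ₗ[R] TP R V (a + 1) ⊗[R] TP R V (b + 1),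
      map (component R ℕ _ a) (component R ℕ _ b) ∘ₗ Delta R V ∘ₗ lof R ℕ _ (a + b + 1) =
        E.toLinearMap := by
    rw [map_comp_Delta_comp_lof, Fintype.sum_eq_single ⟨a, by omega⟩]
    · refine ⟨.ofBijective _ ?_, LinearMap.ext fun x => (LinearEquiv.ofBijective_apply _ x).symm⟩
      refine (map_bijective ?_ ?_).comp ((splitTP R V _ _).bijective.comp (pcast R V _).bijective)
      · exact bijective_component_comp_lof rfl
      · exact (bijective_component_comp_lof (by dsimp only; omega)).comp (pcast R V _).bijective
    · intro i hi
      rw [component_comp_lof, dif_neg fun h => hi (Fin.ext h), map_zero_left, zero_comp]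
  refine ⟨E, linearMap_ext R fun n => ?_⟩
  rw [comp_assoc, comp_assoc]
  rcases eq_or_ne n (a + b + 1) with rfl | hn
  · rw [hE, component_comp_lof_same, comp_id]
  · rw [map_comp_Delta_comp_lof, component_comp_lof, dif_neg hn, comp_zero]
    refine Finset.sum_eq_zero fun i _ => ?_
    by_cases hia : (i : ℕ) = a
    · rw [component_comp_lof (R := R) (i := b), dif_neg (by omega), zero_comp, map_zero_right,
        zero_comp]
    · rw [component_comp_lof, dif_neg hia, map_zero_left, zero_comp]

theorem exists_comp_block_succ {Φ : TCoalg R V →ₗ[R] TCoalg R V} (hΦ : IsCoalgMor R V Φ)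
    (m : ℕ) : ∃ E : TP R V (m + 1 + 1) ≃ₗ[R] TP R V (0 + 1) ⊗[R] TP R V (m + 1), ∀ n,
      E.toLinearMap ∘ₗ block Φ (m + 1) n =
        ∑ i : Fin n, map (block Φ 0 i)
            (block Φ m (n - 1 - i) ∘ₗ (pcast R V (by have := i.isLt; omega)).toLinearMap) ∘ₗ
          (splitTP R V (i + 1) (n - i)).toLinearMap ∘ₗ
            (pcast R V (by have := i.isLt; omega)).toLinearMap := by
  obtain ⟨E, hE⟩ := exists_map_component_comp_Delta (R := R) (V := V) (a := 0) (b := m)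
    (c := m + 1) (by omega)
  refine ⟨E, fun n => ?_⟩
  have hΦn : Delta R V ∘ₗ Φ ∘ₗ lof R ℕ _ n = map Φ Φ ∘ₗ Delta R V ∘ₗ lof R ℕ _ n := by
    rw [← comp_assoc, ← comp_assoc]
    exact congrArg (· ∘ₗ lof R ℕ _ n) hΦ
  calc E.toLinearMap ∘ₗ block Φ (m + 1) n
      = map (component R ℕ _ 0) (component R ℕ _ m) ∘ₗ Delta R V ∘ₗ Φ ∘ₗ lof R ℕ _ n := by
        rw [← comp_assoc, hE]; rfl
    _ = map (component R ℕ _ 0 ∘ₗ Φ) (component R ℕ _ m ∘ₗ Φ) ∘ₗ Delta R V ∘ₗ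
          lof R ℕ _ n := by
        rw [hΦn, ← comp_assoc, ← TensorProduct.map_comp]
    _ = _ := by rw [map_comp_Delta_comp_lof]; rfl

theorem block_eq_zero_of_lt {Φ : TCoalg R V →ₗ[R] TCoalg R V} (hΦ : IsCoalgMor R V Φ) :
    ∀ n m, n < m → block Φ m n = 0 := by
  intro n
  induction n using Nat.strong_induction_on with
  | _ n ih =>
    rintro (_ | m) hnm
    · omega
    obtain ⟨E, hE⟩ := exists_comp_block_succ hΦ m
    have h := hE n
    rw [Finset.sum_eq_zero fun i _ => ?_] at h
    · exact LinearMap.ext fun x => E.injective (by simpa using LinearMap.congr_fun h x)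
    · rw [ih (n - 1 - i) (by omega) m (by omega), zero_comp, map_zero_right, zero_comp]

theorem bijective_block_zero_zero {Φ : TCoalg R V →ₗ[R] TCoalg R V}
    (h1 : Function.Bijective (projV R V ∘ₗ Φ ∘ₗ inclV R V)) :
    Function.Bijective (block Φ 0 0) := by
  set e : TP R V 1 ≃ₗ[R] V := subsingletonEquiv 0
  have : block Φ 0 0 =
      e.symm.toLinearMap ∘ₗ (projV R V ∘ₗ Φ ∘ₗ inclV R V) ∘ₗ e.toLinearMap := by
    refine LinearMap.ext fun x => ?_
    simp [projV, inclV, block, e]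
  rw [this]
  exact e.symm.bijective.comp (h1.comp e.bijective)

theorem bijective_block_self {Φ : TCoalg R V →ₗ[R] TCoalg R V} (hΦ : IsCoalgMor R V Φ)
    (h1 : Function.Bijective (projV R V ∘ₗ Φ ∘ₗ inclV R V)) :
    ∀ n, Function.Bijective (block Φ n n)
  | 0 => bijective_block_zero_zero h1
  | m + 1 => by
    obtain ⟨E, hE⟩ := exists_comp_block_succ hΦ m
    have h := hE (m + 1)
    rw [Fintype.sum_eq_single ⟨0, by omega⟩ fun i hi => ?_] at h
    · refine (Function.Bijective.of_comp_iff' E.bijective _).mp ?_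
      rw [← LinearEquiv.coe_coe, ← coe_comp, h]
      refine (map_bijective ?_ ?_).comp ((splitTP R V _ _).bijective.comp (pcast R V _).bijective)
      · exact bijective_block_zero_zero h1
      · exact (bijective_block_self hΦ h1 m).comp (pcast R V _).bijective
    · have hi0 : (i : ℕ) ≠ 0 := fun h => hi (Fin.ext h)
      rw [block_eq_zero_of_lt hΦ (m + 1 - 1 - i) m (by omega), zero_comp, map_zero_right,
        zero_comp]

theorem IsCoalgMor.symm {e : TCoalg R V ≃ₗ[R] TCoalg R V} (he : IsCoalgMor R V e) :
    IsCoalgMor R V e.symm := by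
  unfold IsCoalgMor at he ⊢
  rw [LinearEquiv.comp_toLinearMap_symm_eq, comp_assoc, he, ← comp_assoc,
    ← TensorProduct.map_comp, LinearEquiv.symm_comp, TensorProduct.map_id, id_comp]

end TensorCoalgebra

/-- STATEMENT 19: a coalgebra endomorphism of the reduced tensor coalgebra whose arity-1 term
is an isomorphism is itself a coalgebra isomorphism (it admits a two-sided inverse which is a
coalgebra morphism). -/
theorem stmt19 (Φ : TCoalg R V →ₗ[R] TCoalg R V) (hΦ : IsCoalgMor R V Φ)
    (h1 : Function.Bijective ((projV R V).comp (Φ.comp (inclV R V)))) :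
    ∃ Ψ : TCoalg R V →ₗ[R] TCoalg R V, IsCoalgMor R V Ψ ∧
      Ψ.comp Φ = LinearMap.id ∧ Φ.comp Ψ = LinearMap.id := by
  have hbij : Function.Bijective Φ :=
    DirectSum.bijective_of_block_triangular (block_eq_zero_of_lt hΦ) (bijective_block_self hΦ h1)
  let e := LinearEquiv.ofBijective Φ hbij
  exact ⟨e.symm, IsCoalgMor.symm (e := e) hΦ, LinearMap.ext e.symm_apply_apply,
    LinearMap.ext e.apply_symm_apply⟩
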